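/- If 𝒫 ⊆ ℤ^m and 𝒬 ⊆ ℤ^n are polyhedral sets and E: ℤ^m → ℤ^n is an integer affine transform E(v) = vA + b with A ∈ ℤ^{m×n}, b ∈ ℤ^n, then E(𝒫) and E^{-1}(𝒬) are polyhedral sets. -/

import Mathlib

/-- An elementary region in `ℤ^m`: a hyperplane `{z | a·z = b}`, an open half-space
`{z | a·z > b}`, or a congruence set `{z | a·z ≡ b (mod c)}` with `c > 0`. -/
def ElementaryRegion {m : ℕ} (E : Set (Fin m → ℤ)) : Prop :=
  (∃ (a : Fin m → ℤ) (b : ℤ), E = {z | (∑ i, a i * z i) = b}) ∨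
  (∃ (a : Fin m → ℤ) (b : ℤ), E = {z | (∑ i, a i * z i) > b}) ∨
  (∃ (a : Fin m → ℤ) (b c : ℤ), 0 < c ∧ E = {z | (∑ i, a i * z i) ≡ b [ZMOD c]})

/-- A basic polyhedral set is a finite intersection of elementary regions. -/
def BasicPolyhedral {m : ℕ} (B : Set (Fin m → ℤ)) : Prop :=
  ∃ (k : ℕ) (E : Fin k → Set (Fin m → ℤ)),
    (∀ i, ElementaryRegion (E i)) ∧ B = ⋂ i, E i

/-- A polyhedral set is a finite disjoint union of basic polyhedral sets. -/
def Polyhedral {m : ℕ} (P : Set (Fin m → ℤ)) : Prop :=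
  ∃ (k : ℕ) (B : Fin k → Set (Fin m → ℤ)),
    (∀ i, BasicPolyhedral (B i)) ∧
    (∀ i j, i ≠ j → Disjoint (B i) (B j)) ∧
    P = ⋃ i, B i

/-!
Polyhedral sets form a ring of sets. Basic sets are closed under intersection, and the complement
of an elementary region is a finite disjoint union of elementary regions; hence basic sets form a
semiring of sets, whose finite disjoint unions are closed under union and difference.

An affine map pulls elementary regions back to elementary regions, which settles preimages. The
image `E(P)` is the projection of the graph of `E` over `P`, and coordinates are eliminated one at
a time by Cooper's method. In its last coordinate `x`, a basic set is cut out by lower bounds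
`x > ⌊q(y) / α⌋`, upper bounds and congruences of a common period `L`; so if some `x ≥ 0` works,
one works within `L` of the largest of these lower bounds and `-1`, and negative `x` are handled
by reflection. Substituting `x = ⌊q(y) / α⌋ + d` is an affine substitution once the residue of
`q(y)` modulo `α` is fixed.
-/

open Matrix Set MeasureTheory

theorem Int.not_modEq_iff_exists_add_modEq {c : ℤ} (hc : 0 < c) {t b : ℤ} :
    ¬t ≡ b [ZMOD c] ↔ ∃ r ∈ Ioo 0 c, t ≡ b + r [ZMOD c] := by
  constructor
  · intro ht
    have hne : (t - b) % c ≠ 0 := fun h =>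
      ht (Int.modEq_iff_dvd.mpr (Int.dvd_of_emod_eq_zero h)).symm
    refine ⟨(t - b) % c,
      ⟨lt_of_le_of_ne (Int.emod_nonneg _ hc.ne') hne.symm, Int.emod_lt_of_pos _ hc⟩, ?_⟩
    have := (Int.mod_modEq (t - b) c).add_left b
    rw [add_sub_cancel] at this
    exact this.symm
  · rintro ⟨r, ⟨hr0, hrc⟩, hr⟩ htb
    have hdvd : c ∣ r := by simpa using Int.modEq_iff_dvd.mp (htb.symm.trans hr)
    exact absurd (Int.le_of_dvd hr0 hdvd) (not_le.mpr hrc)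

theorem dotProduct_snoc {R : Type*} [NonUnitalNonAssocSemiring R] {k : ℕ} (a : Fin (k + 1) → R)
    (y : Fin k → R) (x : R) : a ⬝ᵥ Fin.snoc y x = Fin.init a ⬝ᵥ y + a (Fin.last k) * x := by
  simp [dotProduct, Fin.sum_univ_castSucc, Fin.init]

section

variable {m : ℕ}

theorem elementaryRegion_iff {E : Set (Fin m → ℤ)} :
    ElementaryRegion E ↔
      (∃ (a : Fin m → ℤ) (b : ℤ), E = {z | a ⬝ᵥ z = b}) ∨
      (∃ (a : Fin m → ℤ) (b : ℤ), E = {z | a ⬝ᵥ z > b}) ∨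
      (∃ (a : Fin m → ℤ) (b c : ℤ), 0 < c ∧ E = {z | a ⬝ᵥ z ≡ b [ZMOD c]}) :=
  Iff.rfl

theorem ElementaryRegion.basicPolyhedral {E : Set (Fin m → ℤ)} (hE : ElementaryRegion E) :
    BasicPolyhedral E :=
  ⟨1, fun _ => E, fun _ => hE, (iInter_const E).symm⟩

theorem basicPolyhedral_univ : BasicPolyhedral (univ : Set (Fin m → ℤ)) :=
  ⟨0, Fin.elim0, Fin.rec0, by simp⟩

theorem BasicPolyhedral.inter {B C : Set (Fin m → ℤ)} (hB : BasicPolyhedral B)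
    (hC : BasicPolyhedral C) : BasicPolyhedral (B ∩ C) := by
  obtain ⟨k, E, hE, rfl⟩ := hB
  obtain ⟨l, F, hF, rfl⟩ := hC
  refine ⟨k + l, Fin.append E F, Fin.addCases (by simpa using hE) (by simpa using hF), ?_⟩
  ext z
  simp only [mem_inter_iff, mem_iInter]
  constructor
  · rintro ⟨hzE, hzF⟩ i
    induction i using Fin.addCases <;> simp [*]
  · intro h
    exact ⟨fun i => by simpa using h (Fin.castAdd l i), fun j => by simpa using h (Fin.natAdd k j)⟩

theorem pairwiseDisjoint_setOf_modEq_add {a : Fin m → ℤ} {b c : ℤ} :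
    (Ioo 0 c).PairwiseDisjoint fun r => {z | a ⬝ᵥ z ≡ b + r [ZMOD c]} :=
  fun r hr r' hr' hne => disjoint_left.mpr fun z h₁ h₂ => hne <| by
    have hdvd : c ∣ r' - r := by simpa using ((h₁.symm.trans h₂).add_left_cancel' b).dvd
    have := Int.eq_zero_of_abs_lt_dvd hdvd (by rw [abs_lt]; grind)
    omega

theorem ElementaryRegion.exists_finset_compl {E : Set (Fin m → ℤ)} (hE : ElementaryRegion E) :
    ∃ I : Finset (Set (Fin m → ℤ)), (∀ F ∈ I, ElementaryRegion F) ∧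
      (I : Set (Set (Fin m → ℤ))).PairwiseDisjoint id ∧ Eᶜ = ⋃₀ I := by
  classical
  rcases elementaryRegion_iff.mp hE with ⟨a, b, rfl⟩ | ⟨a, b, rfl⟩ | ⟨a, b, c, hc, rfl⟩
  · refine ⟨{{z | a ⬝ᵥ z > b}, {z | -a ⬝ᵥ z > -b}}, ?_, ?_, ?_⟩
    · simp only [Finset.mem_insert, Finset.mem_singleton]
      rintro F (rfl | rfl)
      exacts [.inr (.inl ⟨a, b, rfl⟩), .inr (.inl ⟨-a, -b, rfl⟩)]
    · rw [Finset.coe_pair]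
      refine (pairwiseDisjoint_singleton _ _).insert fun F hF _ => ?_
      rw [mem_singleton_iff.mp hF]
      exact disjoint_left.mpr fun z h₁ h₂ => by
        simp only [id, mem_ofPred_eq, neg_dotProduct] at h₁ h₂
        omega
    · ext z
      simp only [mem_compl_iff, mem_ofPred_eq, Finset.coe_pair, sUnion_insert, sUnion_singleton,
        mem_union, neg_dotProduct]
      omega
  · refine ⟨{{z | -a ⬝ᵥ z > -b - 1}}, ?_, by simp, ?_⟩
    · simp only [Finset.mem_singleton, forall_eq]
      exact .inr (.inl ⟨-a, -b - 1, rfl⟩)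
    · ext z
      simp only [mem_compl_iff, mem_ofPred_eq, Finset.coe_singleton, sUnion_singleton,
        neg_dotProduct]
      omega
  · refine ⟨(Finset.Ioo 0 c).image fun r => {z | a ⬝ᵥ z ≡ b + r [ZMOD c]}, ?_, ?_, ?_⟩
    · simp only [Finset.mem_image]
      rintro F ⟨r, -, rfl⟩
      exact .inr (.inr ⟨a, b + r, c, hc, rfl⟩)
    · rw [Finset.coe_image, Finset.coe_Ioo]
      exact pairwiseDisjoint_setOf_modEq_add.image
    · ext z
      simp only [mem_compl_iff, mem_ofPred_eq, Finset.coe_image, Finset.coe_Ioo, sUnion_image,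
        mem_iUnion, exists_prop]
      exact Int.not_modEq_iff_exists_add_modEq hc

theorem BasicPolyhedral.exists_finset_sdiff_iInter {s : Set (Fin m → ℤ)}
    (hs : BasicPolyhedral s) {k : ℕ} (E : Fin k → Set (Fin m → ℤ))
    (hE : ∀ i, ElementaryRegion (E i)) :
    ∃ I : Finset (Set (Fin m → ℤ)), (I : Set (Set (Fin m → ℤ))) ⊆ {B | BasicPolyhedral B} ∧
      (I : Set (Set (Fin m → ℤ))).PairwiseDisjoint id ∧ s \ ⋂ i, E i = ⋃₀ I := by
  classical
  induction k generalizing s with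
  | zero => exact ⟨∅, by simp, by simp, by simp⟩
  | succ k ih =>
    obtain ⟨J, hJ, hJd, hJc⟩ := (hE 0).exists_finset_compl
    obtain ⟨I, hI, hId, hIs⟩ :=
      ih (hs.inter (hE 0).basicPolyhedral) (fun i => E i.succ) fun i => hE _
    have hsplit : s \ ⋂ i, E i = (s ∩ (E 0)ᶜ) ∪ ((s ∩ E 0) \ ⋂ i : Fin k, E i.succ) := by
      ext z
      simp only [mem_sdiff, mem_iInter, Fin.forall_fin_succ, mem_inter_iff, mem_union,
        mem_compl_iff]
      tauto
    refine ⟨J.image (s ∩ ·) ∪ I, ?_, ?_, ?_⟩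
    · rw [Finset.coe_union, Finset.coe_image, union_subset_iff]
      exact ⟨image_subset_iff.mpr fun F hF => hs.inter (hJ F hF).basicPolyhedral, hI⟩
    · rw [Finset.coe_union, Finset.coe_image, pairwiseDisjoint_union]
      refine ⟨hJd.image_of_le fun F => inter_subset_right, hId, ?_⟩
      rintro _ ⟨F, hF, rfl⟩ G hG -
      have hF' : F ⊆ (E 0)ᶜ := hJc ▸ subset_sUnion_of_mem hF
      have hG' : G ⊆ E 0 := (subset_sUnion_of_mem hG).trans
        (hIs ▸ sdiff_subset.trans inter_subset_right)
      exact disjoint_compl_left.mono (inter_subset_right.trans hF') hG'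
    · rw [hsplit, hIs, hJc, Finset.coe_union, sUnion_union, Finset.coe_image, sUnion_image,
        sUnion_eq_biUnion, inter_iUnion₂]

theorem isSetSemiring_basicPolyhedral :
    IsSetSemiring {B : Set (Fin m → ℤ) | BasicPolyhedral B} where
  empty_mem := by
    have : (∅ : Set (Fin m → ℤ)) = {z | 0 ⬝ᵥ z = 1} := by ext; simp
    exact this ▸ ElementaryRegion.basicPolyhedral (.inl ⟨0, 1, rfl⟩)
  inter_mem _ hs _ ht := BasicPolyhedral.inter hs ht
  sdiff_eq_sUnion' _ hs _ := by
    rintro ⟨k, E, hE, rfl⟩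
    exact BasicPolyhedral.exists_finset_sdiff_iInter hs E hE

theorem polyhedral_iff_mem_supClosure {P : Set (Fin m → ℤ)} :
    Polyhedral P ↔ P ∈ supClosure {B : Set (Fin m → ℤ) | BasicPolyhedral B} := by
  constructor
  · rintro ⟨k, B, hB, -, rfl⟩
    simpa using isSetSemiring_basicPolyhedral.isSetRing_supClosure.biUnion_mem Finset.univ
      fun i _ => subset_supClosure (hB i)
  · intro hP
    obtain ⟨Q, hQ⟩ := isSetSemiring_basicPolyhedral.mem_supClosure_iff.mp hP
    let e := Q.parts.equivFin.symm
    refine ⟨Q.parts.card, fun i => e i, fun i => hQ (e i).2,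
      fun i j hij => Q.disjoint (e i).2 (e j).2 fun h => hij (e.injective (Subtype.ext h)), ?_⟩
    calc P = Q.parts.sup id := Q.sup_parts.symm
      _ = ⋃ x : Q.parts, (x : Set (Fin m → ℤ)) := by
        rw [Finset.sup_id_set_eq_sUnion, sUnion_eq_iUnion]; rfl
      _ = ⋃ i, e i := (e.iSup_comp (g := fun x : Q.parts => (x : Set (Fin m → ℤ)))).symm

theorem isSetRing_polyhedral : IsSetRing {P : Set (Fin m → ℤ) | Polyhedral P} := by
  convert isSetSemiring_basicPolyhedral.isSetRing_supClosure
  exact Set.ext fun _ => polyhedral_iff_mem_supClosure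

theorem BasicPolyhedral.polyhedral {B : Set (Fin m → ℤ)} (hB : BasicPolyhedral B) :
    Polyhedral B :=
  polyhedral_iff_mem_supClosure.mpr (subset_supClosure hB)

namespace Polyhedral

variable {P Q : Set (Fin m → ℤ)}

theorem union (hP : Polyhedral P) (hQ : Polyhedral Q) : Polyhedral (P ∪ Q) :=
  isSetRing_polyhedral.union_mem hP hQ

theorem inter (hP : Polyhedral P) (hQ : Polyhedral Q) : Polyhedral (P ∩ Q) :=
  isSetRing_polyhedral.inter_mem hP hQ

theorem compl (hP : Polyhedral P) : Polyhedral Pᶜ := by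
  simpa [compl_eq_univ_sdiff] using
    isSetRing_polyhedral.sdiff_mem basicPolyhedral_univ.polyhedral hP

theorem biUnion {ι : Type*} {s : Set ι} (hs : s.Finite) {F : ι → Set (Fin m → ℤ)}
    (hF : ∀ i ∈ s, Polyhedral (F i)) : Polyhedral (⋃ i ∈ s, F i) := by
  simpa using
    isSetRing_polyhedral.biUnion_mem hs.toFinset fun i hi => hF i (hs.mem_toFinset.mp hi)

theorem iUnion {ι : Type*} [Finite ι] {F : ι → Set (Fin m → ℤ)} (hF : ∀ i, Polyhedral (F i)) :
    Polyhedral (⋃ i, F i) := by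
  simpa using biUnion finite_univ fun i _ => hF i

theorem iInter {ι : Type*} [Finite ι] {F : ι → Set (Fin m → ℤ)} (hF : ∀ i, Polyhedral (F i)) :
    Polyhedral (⋂ i, F i) := by
  simpa using (iUnion fun i => (hF i).compl).compl

end Polyhedral

section Affine

variable {n : ℕ}

/-- `φ : ℤ^m → ℤ^n` is affine: it pulls every affine form on `ℤ^n` back to an affine form. -/
def IsIntAffine (φ : (Fin m → ℤ) → Fin n → ℤ) : Prop :=
  ∀ a : Fin n → ℤ, ∃ (a' : Fin m → ℤ) (b : ℤ), ∀ v, a ⬝ᵥ φ v = a' ⬝ᵥ v + b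

theorem isIntAffine_vecMul_add (A : Matrix (Fin m) (Fin n) ℤ) (b : Fin n → ℤ) :
    IsIntAffine fun v => v ᵥ* A + b := fun a =>
  ⟨A *ᵥ a, a ⬝ᵥ b, fun v => by
    rw [dotProduct_add, dotProduct_comm a, ← dotProduct_mulVec, dotProduct_comm v]⟩

theorem isIntAffine_comp_right (f : Fin n → Fin m) :
    IsIntAffine fun z : Fin m → ℤ => z ∘ f := by
  have : (fun z : Fin m → ℤ => z ∘ f) =
      fun z => z ᵥ* Matrix.of (fun i j => if i = f j then 1 else 0) + 0 := by
    ext z j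
    simp [vecMul, dotProduct]
  rw [this]
  exact isIntAffine_vecMul_add _ _

theorem IsIntAffine.comp {k : ℕ} {φ : (Fin n → ℤ) → Fin k → ℤ} {ψ : (Fin m → ℤ) → Fin n → ℤ}
    (hφ : IsIntAffine φ) (hψ : IsIntAffine ψ) : IsIntAffine (φ ∘ ψ) := fun a => by
  obtain ⟨a₁, b₁, h₁⟩ := hφ a
  obtain ⟨a₂, b₂, h₂⟩ := hψ a₁
  exact ⟨a₂, b₂ + b₁, fun v => by rw [Function.comp_apply, h₁, h₂, add_assoc]⟩

theorem IsIntAffine.sub {φ ψ : (Fin m → ℤ) → Fin n → ℤ} (hφ : IsIntAffine φ)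
    (hψ : IsIntAffine ψ) : IsIntAffine fun v => φ v - ψ v := fun a => by
  obtain ⟨a₁, b₁, h₁⟩ := hφ a
  obtain ⟨a₂, b₂, h₂⟩ := hψ a
  exact ⟨a₁ - a₂, b₁ - b₂, fun v => by rw [dotProduct_sub, h₁, h₂, sub_dotProduct]; ring⟩

theorem isIntAffine_snoc {k : ℕ} (c : Fin k → ℤ) (e : ℤ) :
    IsIntAffine fun y : Fin k → ℤ => (Fin.snoc y (c ⬝ᵥ y + e) : Fin (k + 1) → ℤ) := fun a =>
  ⟨Fin.init a + a (Fin.last k) • c, a (Fin.last k) * e, fun y => by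
    rw [dotProduct_snoc, add_dotProduct, smul_dotProduct, smul_eq_mul]; ring⟩

theorem isIntAffine_snoc_neg_last {k : ℕ} :
    IsIntAffine fun z : Fin (k + 1) → ℤ =>
      (Fin.snoc (Fin.init z) (-z (Fin.last k)) : Fin (k + 1) → ℤ) :=
  fun a => ⟨Fin.snoc (Fin.init a) (-a (Fin.last k)), 0, fun z => by
    conv_rhs => rw [← Fin.snoc_init_self z]
    rw [dotProduct_snoc, dotProduct_snoc, Fin.init_snoc, Fin.snoc_last]; ring⟩

theorem ElementaryRegion.preimage {φ : (Fin m → ℤ) → Fin n → ℤ} (hφ : IsIntAffine φ)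
    {E : Set (Fin n → ℤ)} (hE : ElementaryRegion E) : ElementaryRegion (φ ⁻¹' E) := by
  refine elementaryRegion_iff.mpr ?_
  rcases elementaryRegion_iff.mp hE with ⟨a, b, rfl⟩ | ⟨a, b, rfl⟩ | ⟨a, b, c, hc, rfl⟩ <;>
    obtain ⟨a', b', h⟩ := hφ a
  · exact .inl ⟨a', b - b', by ext v; simp only [mem_preimage, mem_ofPred_eq, h]; omega⟩
  · exact .inr (.inl ⟨a', b - b', by ext v; simp only [mem_preimage, mem_ofPred_eq, h]; omega⟩)
  · refine .inr (.inr ⟨a', b - b', c, hc, ?_⟩)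
    ext v
    simp only [mem_preimage, mem_ofPred_eq, h, Int.modEq_iff_dvd, sub_sub, add_comm b']

theorem BasicPolyhedral.preimage {φ : (Fin m → ℤ) → Fin n → ℤ} (hφ : IsIntAffine φ)
    {B : Set (Fin n → ℤ)} (hB : BasicPolyhedral B) : BasicPolyhedral (φ ⁻¹' B) := by
  obtain ⟨k, E, hE, rfl⟩ := hB
  exact ⟨k, fun i => φ ⁻¹' E i, fun i => (hE i).preimage hφ, preimage_iInter⟩

theorem Polyhedral.preimage_of_elementary {φ : (Fin m → ℤ) → Fin n → ℤ}
    (hφ : ∀ E, ElementaryRegion E → Polyhedral (φ ⁻¹' E)) {P : Set (Fin n → ℤ)}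
    (hP : Polyhedral P) : Polyhedral (φ ⁻¹' P) := by
  obtain ⟨k, B, hB, -, rfl⟩ := hP
  rw [preimage_iUnion]
  refine Polyhedral.iUnion fun i => ?_
  obtain ⟨l, E, hE, hBi⟩ := hB i
  rw [hBi, preimage_iInter]
  exact Polyhedral.iInter fun j => hφ _ (hE j)

theorem Polyhedral.preimage {φ : (Fin m → ℤ) → Fin n → ℤ} (hφ : IsIntAffine φ)
    {P : Set (Fin n → ℤ)} (hP : Polyhedral P) : Polyhedral (φ ⁻¹' P) :=
  hP.preimage_of_elementary fun _ hE => (hE.preimage hφ).basicPolyhedral.polyhedral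

theorem polyhedral_singleton_zero : Polyhedral ({0} : Set (Fin n → ℤ)) :=
  BasicPolyhedral.polyhedral ⟨n, fun j => {w | Pi.single j 1 ⬝ᵥ w = 0}, fun j => .inl ⟨_, _, rfl⟩,
    by ext w; simp [single_dotProduct, funext_iff]⟩

end Affine

end

section FloorSubstitution

variable {k : ℕ}

/-- Integer division by `α > 0` rounds down, so `ℓ y = ⌊(c ⬝ y + e) / α⌋`. -/
def IsFloorAffine (ℓ : (Fin k → ℤ) → ℤ) : Prop :=
  ∃ (c : Fin k → ℤ) (e α : ℤ), 0 < α ∧ ℓ = fun y => (c ⬝ᵥ y + e) / α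

theorem IsFloorAffine.add_const {ℓ : (Fin k → ℤ) → ℤ} (hℓ : IsFloorAffine ℓ) (d : ℤ) :
    IsFloorAffine fun y => ℓ y + d := by
  obtain ⟨c, e, α, hα, rfl⟩ := hℓ
  exact ⟨c, e + d * α, α, hα,
    funext fun y => by rw [← add_assoc, Int.add_mul_ediv_right _ _ hα.ne']⟩

theorem ElementaryRegion.exists_mul_last {E : Set (Fin (k + 1) → ℤ)} (hE : ElementaryRegion E)
    {α : ℤ} (hα : 0 < α) :
    ∃ E', ElementaryRegion E' ∧ ∀ y x, Fin.snoc y (α * x) ∈ E' ↔ Fin.snoc y x ∈ E := by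
  have key (a : Fin (k + 1) → ℤ) (y : Fin k → ℤ) (x : ℤ) :
      Fin.snoc (α • Fin.init a) (a (Fin.last k)) ⬝ᵥ Fin.snoc y (α * x) =
        α * (a ⬝ᵥ Fin.snoc y x) := by
    simp only [dotProduct_snoc, Fin.init_snoc, Fin.snoc_last, smul_dotProduct, smul_eq_mul]
    ring
  rcases elementaryRegion_iff.mp hE with ⟨a, b, rfl⟩ | ⟨a, b, rfl⟩ | ⟨a, b, c, hc, rfl⟩ <;>
    set a' : Fin (k + 1) → ℤ := Fin.snoc (α • Fin.init a) (a (Fin.last k))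
  · refine ⟨{z | a' ⬝ᵥ z = α * b}, .inl ⟨a', α * b, rfl⟩, fun y x => ?_⟩
    simp only [mem_ofPred_eq, a', key]
    exact mul_right_inj' hα.ne'
  · refine ⟨{z | a' ⬝ᵥ z > α * b}, .inr (.inl ⟨a', α * b, rfl⟩), fun y x => ?_⟩
    simp only [mem_ofPred_eq, a', key, gt_iff_lt]
    exact mul_lt_mul_iff_right₀ hα
  · refine ⟨{z | a' ⬝ᵥ z ≡ α * b [ZMOD α * c]},
      .inr (.inr ⟨a', α * b, α * c, mul_pos hα hc, rfl⟩), fun y x => ?_⟩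
    simp only [mem_ofPred_eq, a', key, Int.modEq_iff_dvd, ← mul_sub]
    exact mul_dvd_mul_iff_left hα.ne'

theorem ElementaryRegion.polyhedral_snoc_floorAffine {E : Set (Fin (k + 1) → ℤ)}
    (hE : ElementaryRegion E) {ℓ : (Fin k → ℤ) → ℤ} (hℓ : IsFloorAffine ℓ) :
    Polyhedral {y | Fin.snoc y (ℓ y) ∈ E} := by
  obtain ⟨c, e, α, hα, rfl⟩ := hℓ
  obtain ⟨E', hE', hE'E⟩ := hE.exists_mul_last hα
  set C : Set (Fin (k + 1) → ℤ) := {z | Pi.single (Fin.last k) 1 ⬝ᵥ z ≡ 0 [ZMOD α]}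
  have hC : ElementaryRegion C := .inr (.inr ⟨_, 0, α, hα, rfl⟩)
  have hsplit : {y | Fin.snoc y ((c ⬝ᵥ y + e) / α) ∈ E} =
      ⋃ r ∈ Ico 0 α, (fun y => (Fin.snoc y (c ⬝ᵥ y + (e - r)) : Fin (k + 1) → ℤ)) ⁻¹' (E' ∩ C) := by
    ext y
    simp only [mem_ofPred_eq, mem_iUnion, mem_preimage, mem_inter_iff, C, single_dotProduct,
      Fin.snoc_last, one_mul, Int.modEq_zero_iff_dvd, mem_Ico, exists_prop]
    constructor
    · intro h
      refine ⟨(c ⬝ᵥ y + e) % α, ⟨Int.emod_nonneg _ hα.ne', Int.emod_lt_of_pos _ hα⟩, ?_⟩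
      have hq : c ⬝ᵥ y + (e - (c ⬝ᵥ y + e) % α) = α * ((c ⬝ᵥ y + e) / α) := by
        linarith [Int.emod_add_mul_ediv (c ⬝ᵥ y + e) α]
      rw [hq]
      exact ⟨(hE'E _ _).mpr h, dvd_mul_right _ _⟩
    · rintro ⟨r, ⟨hr0, hrα⟩, hmem, t, ht⟩
      have hdiv : (c ⬝ᵥ y + e) / α = t := by
        rw [show c ⬝ᵥ y + e = r + α * t by linarith, Int.add_mul_ediv_left _ _ hα.ne',
          Int.ediv_eq_zero_of_lt hr0 hrα, zero_add]
      rw [ht] at hmem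
      exact hdiv ▸ (hE'E _ _).mp hmem
  rw [hsplit]
  exact Polyhedral.biUnion (finite_Ico 0 α) fun r _ =>
    (hE'.basicPolyhedral.inter hC.basicPolyhedral).polyhedral.preimage (isIntAffine_snoc c (e - r))

theorem Polyhedral.preimage_snoc_floorAffine {B : Set (Fin (k + 1) → ℤ)} (hB : Polyhedral B)
    {ℓ : (Fin k → ℤ) → ℤ} (hℓ : IsFloorAffine ℓ) : Polyhedral {y | Fin.snoc y (ℓ y) ∈ B} :=
  hB.preimage_of_elementary (φ := fun y => Fin.snoc y (ℓ y)) fun _ hE =>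
    hE.polyhedral_snoc_floorAffine hℓ

end FloorSubstitution

section Cooper

variable {k : ℕ}

/-- Cooper's description of `B ⊆ ℤ^(k+1)` in its last coordinate `x`: every point of `B` lies
strictly above the finitely many lower bounds `ℓ ∈ Λ`, and stays in `B` when `x` is lowered by a
multiple of the period `L` as long as it remains above them. -/
structure PeriodicAbove (L : ℤ) (Λ : Set ((Fin k → ℤ) → ℤ)) (B : Set (Fin (k + 1) → ℤ)) :
    Prop where
  period_pos : 0 < L
  finite : Λ.Finite
  isFloorAffine : ∀ ℓ ∈ Λ, IsFloorAffine ℓ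
  lt_of_mem : ∀ {y x}, Fin.snoc y x ∈ B → ∀ ℓ ∈ Λ, ℓ y < x
  mem_of_modEq : ∀ {y x x'}, Fin.snoc y x ∈ B → x' ≡ x [ZMOD L] → x' ≤ x →
    (∀ ℓ ∈ Λ, ℓ y < x') → Fin.snoc y x' ∈ B

variable {L L₁ L₂ : ℤ} {Λ Λ₁ Λ₂ : Set ((Fin k → ℤ) → ℤ)} {B B₁ B₂ : Set (Fin (k + 1) → ℤ)}

theorem PeriodicAbove.inter (h₁ : PeriodicAbove L₁ Λ₁ B₁) (h₂ : PeriodicAbove L₂ Λ₂ B₂) :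
    PeriodicAbove (L₁ * L₂) (Λ₁ ∪ Λ₂) (B₁ ∩ B₂) where
  period_pos := mul_pos h₁.period_pos h₂.period_pos
  finite := h₁.finite.union h₂.finite
  isFloorAffine ℓ hℓ := hℓ.elim (h₁.isFloorAffine ℓ) (h₂.isFloorAffine ℓ)
  lt_of_mem hx ℓ hℓ := hℓ.elim (h₁.lt_of_mem hx.1 ℓ) (h₂.lt_of_mem hx.2 ℓ)
  mem_of_modEq hx hmod hle hlt :=
    ⟨h₁.mem_of_modEq hx.1 (hmod.of_mul_right _) hle fun ℓ hℓ => hlt ℓ (.inl hℓ),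
      h₂.mem_of_modEq hx.2 (hmod.of_mul_left _) hle fun ℓ hℓ => hlt ℓ (.inr hℓ)⟩

theorem periodicAbove_univ : PeriodicAbove 1 ∅ (univ : Set (Fin (k + 1) → ℤ)) where
  period_pos := one_pos
  finite := finite_empty
  isFloorAffine := by simp
  lt_of_mem := by simp
  mem_of_modEq := by simp

theorem periodicAbove_halfSpace_of_pos {a : Fin (k + 1) → ℤ} {b : ℤ} (ha : 0 < a (Fin.last k)) :
    PeriodicAbove 1 {fun y => (-Fin.init a ⬝ᵥ y + b) / a (Fin.last k)} {z | a ⬝ᵥ z > b} := by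
  have key (y : Fin k → ℤ) (x : ℤ) :
      Fin.snoc y x ∈ {z | a ⬝ᵥ z > b} ↔ (-Fin.init a ⬝ᵥ y + b) / a (Fin.last k) < x := by
    rw [mem_ofPred_eq, dotProduct_snoc, neg_dotProduct, Int.ediv_lt_iff_lt_mul ha]
    constructor <;> intro <;> linarith
  exact
    { period_pos := one_pos
      finite := finite_singleton _
      isFloorAffine := by rintro ℓ rfl; exact ⟨_, _, _, ha, rfl⟩
      lt_of_mem := by rintro y x hx ℓ rfl; exact (key y x).mp hx
      mem_of_modEq := fun _ _ _ hlt => (key _ _).mpr (hlt _ rfl) }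

theorem periodicAbove_halfSpace_of_nonpos {a : Fin (k + 1) → ℤ} {b : ℤ}
    (ha : a (Fin.last k) ≤ 0) : PeriodicAbove 1 ∅ {z | a ⬝ᵥ z > b} where
  period_pos := one_pos
  finite := finite_empty
  isFloorAffine := by simp
  lt_of_mem := by simp
  mem_of_modEq hx _ hle _ := by
    simp only [mem_ofPred_eq, dotProduct_snoc] at hx ⊢
    nlinarith

theorem periodicAbove_modEq {a : Fin (k + 1) → ℤ} {b c : ℤ} (hc : 0 < c) :
    PeriodicAbove c ∅ {z | a ⬝ᵥ z ≡ b [ZMOD c]} where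
  period_pos := hc
  finite := finite_empty
  isFloorAffine := by simp
  lt_of_mem := by simp
  mem_of_modEq hx hmod _ _ := by
    simp only [mem_ofPred_eq, dotProduct_snoc] at hx ⊢
    exact ((hmod.mul_left _).add_left _).trans hx

theorem ElementaryRegion.exists_periodicAbove {E : Set (Fin (k + 1) → ℤ)}
    (hE : ElementaryRegion E) : ∃ L Λ, PeriodicAbove L Λ E := by
  have halfSpace (a : Fin (k + 1) → ℤ) (b : ℤ) : ∃ L Λ, PeriodicAbove L Λ {z | a ⬝ᵥ z > b} :=
    (lt_or_ge 0 (a (Fin.last k))).elim (fun ha => ⟨_, _, periodicAbove_halfSpace_of_pos ha⟩)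
      fun ha => ⟨_, _, periodicAbove_halfSpace_of_nonpos ha⟩
  rcases elementaryRegion_iff.mp hE with ⟨a, b, rfl⟩ | ⟨a, b, rfl⟩ | ⟨a, b, c, hc, rfl⟩
  · obtain ⟨L₁, Λ₁, h₁⟩ := halfSpace a (b - 1)
    obtain ⟨L₂, Λ₂, h₂⟩ := halfSpace (-a) (-b - 1)
    have hsplit : {z | a ⬝ᵥ z = b} = {z | a ⬝ᵥ z > b - 1} ∩ {z | -a ⬝ᵥ z > -b - 1} := by
      ext z
      simp only [mem_ofPred_eq, mem_inter_iff, neg_dotProduct]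
      omega
    exact ⟨_, _, hsplit ▸ h₁.inter h₂⟩
  · exact halfSpace a b
  · exact ⟨_, _, periodicAbove_modEq hc⟩

theorem BasicPolyhedral.exists_periodicAbove (hB : BasicPolyhedral B) :
    ∃ L Λ, PeriodicAbove L Λ B := by
  obtain ⟨N, E, hE, rfl⟩ := hB
  induction N with
  | zero => exact ⟨1, ∅, by simpa using periodicAbove_univ⟩
  | succ N ih =>
    obtain ⟨L₁, Λ₁, h₁⟩ := (hE 0).exists_periodicAbove
    obtain ⟨L₂, Λ₂, h₂⟩ := ih (fun i => E i.succ) fun i => hE _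
    have hsplit : ⋂ i, E i = E 0 ∩ ⋂ i : Fin N, E i.succ := by
      ext
      simp [Fin.forall_fin_succ]
    exact ⟨_, _, hsplit ▸ h₁.inter h₂⟩

/-- The least witness above the largest lower bound lies within one period of it. -/
theorem PeriodicAbove.exists_snoc_mem_iff (h : PeriodicAbove L Λ B) (hΛ : Λ.Nonempty)
    (y : Fin k → ℤ) :
    (∃ x, Fin.snoc y x ∈ B) ↔ ∃ ℓ ∈ Λ, ∃ d ∈ Icc 1 L, Fin.snoc y (ℓ y + d) ∈ B := by
  refine ⟨fun ⟨x, hx⟩ => ?_, fun ⟨ℓ, _, d, _, hd⟩ => ⟨_, hd⟩⟩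
  obtain ⟨ℓ, hℓ, hmax⟩ := exists_max_image Λ (· y) h.finite hΛ
  have hℓx := h.lt_of_mem hx ℓ hℓ
  have hL := h.period_pos
  have hr0 : 0 ≤ (x - ℓ y - 1) % L := Int.emod_nonneg _ hL.ne'
  have hrL : (x - ℓ y - 1) % L < L := Int.emod_lt_of_pos _ hL
  have hrx : (x - ℓ y - 1) % L ≤ x - ℓ y - 1 := by
    have := Int.emod_add_mul_ediv (x - ℓ y - 1) L
    have := mul_nonneg hL.le (Int.ediv_nonneg (by omega : 0 ≤ x - ℓ y - 1) hL.le)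
    omega
  have hmod : ℓ y + ((x - ℓ y - 1) % L + 1) ≡ x [ZMOD L] := by
    have := (Int.mod_modEq (x - ℓ y - 1) L).add_left (ℓ y + 1)
    convert this using 1 <;> ring
  refine ⟨ℓ, hℓ, (x - ℓ y - 1) % L + 1, ⟨by omega, by omega⟩,
    h.mem_of_modEq hx hmod (by omega) fun ℓ' hℓ' => ?_⟩
  linarith [hmax ℓ' hℓ']

end Cooper

section Projection

variable {k : ℕ}

theorem BasicPolyhedral.polyhedral_exists_nonneg_snoc_mem {B : Set (Fin (k + 1) → ℤ)}
    (hB : BasicPolyhedral B) : Polyhedral {y | ∃ x, 0 ≤ x ∧ Fin.snoc y x ∈ B} := by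
  set H : Set (Fin (k + 1) → ℤ) := {z | Pi.single (Fin.last k) 1 ⬝ᵥ z > -1}
  have hH : ElementaryRegion H := .inr (.inl ⟨_, _, rfl⟩)
  have hmemH (y : Fin k → ℤ) (x : ℤ) : Fin.snoc y x ∈ H ↔ 0 ≤ x := by
    simp only [H, mem_ofPred_eq, single_dotProduct, Fin.snoc_last, one_mul]
    omega
  obtain ⟨L, Λ, hΛ, h⟩ : ∃ L Λ, Λ.Nonempty ∧ PeriodicAbove L Λ (B ∩ H) := by
    obtain ⟨L, Λ, h⟩ := hB.exists_periodicAbove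
    exact ⟨_, _, union_nonempty.mpr (.inr (singleton_nonempty _)),
      h.inter (periodicAbove_halfSpace_of_pos (by simp))⟩
  have hsplit : {y | ∃ x, 0 ≤ x ∧ Fin.snoc y x ∈ B} =
      ⋃ ℓ ∈ Λ, ⋃ d ∈ Icc 1 L, {y | Fin.snoc y (ℓ y + d) ∈ B ∩ H} := by
    ext y
    simp only [mem_ofPred_eq, mem_iUnion, exists_prop]
    rw [← h.exists_snoc_mem_iff hΛ y]
    simp only [mem_inter_iff, hmemH, and_comm]
  rw [hsplit]
  exact Polyhedral.biUnion h.finite fun ℓ hℓ => Polyhedral.biUnion (finite_Icc _ _) fun d _ =>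
    (hB.inter hH.basicPolyhedral).polyhedral.preimage_snoc_floorAffine
      ((h.isFloorAffine ℓ hℓ).add_const d)

theorem BasicPolyhedral.polyhedral_image_init {B : Set (Fin (k + 1) → ℤ)}
    (hB : BasicPolyhedral B) : Polyhedral (Fin.init '' B) := by
  set ρ : (Fin (k + 1) → ℤ) → Fin (k + 1) → ℤ := fun z => Fin.snoc (Fin.init z) (-z (Fin.last k))
  have hsplit : Fin.init '' B =
      {y | ∃ x, 0 ≤ x ∧ Fin.snoc y x ∈ B} ∪ {y | ∃ x, 0 ≤ x ∧ Fin.snoc y x ∈ ρ ⁻¹' B} := by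
    ext y
    simp only [mem_image, mem_union, mem_ofPred_eq, mem_preimage, ρ, Fin.init_snoc, Fin.snoc_last]
    constructor
    · rintro ⟨z, hz, rfl⟩
      rw [← Fin.snoc_init_self z] at hz
      rcases le_or_gt 0 (z (Fin.last k)) with h | h
      · exact .inl ⟨_, h, hz⟩
      · exact .inr ⟨_, neg_nonneg.mpr h.le, by rwa [neg_neg]⟩
    · rintro (⟨x, -, hx⟩ | ⟨x, -, hx⟩) <;> exact ⟨_, hx, Fin.init_snoc _ _⟩
  rw [hsplit]
  exact hB.polyhedral_exists_nonneg_snoc_mem.union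
    (hB.preimage isIntAffine_snoc_neg_last).polyhedral_exists_nonneg_snoc_mem

theorem Polyhedral.image_init {P : Set (Fin (k + 1) → ℤ)} (hP : Polyhedral P) :
    Polyhedral (Fin.init '' P) := by
  obtain ⟨N, B, hB, -, rfl⟩ := hP
  rw [image_iUnion]
  exact Polyhedral.iUnion fun i => (hB i).polyhedral_image_init

theorem Polyhedral.image_comp_castAdd {n : ℕ} :
    ∀ {j : ℕ} {Q : Set (Fin (n + j) → ℤ)}, Polyhedral Q →
      Polyhedral ((fun z => z ∘ Fin.castAdd j) '' Q)
  | 0, Q, hQ => by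
    change Polyhedral (id '' Q)
    rwa [image_id]
  | j + 1, Q, hQ => by
    rw [show (fun z : Fin (n + (j + 1)) → ℤ => z ∘ Fin.castAdd (j + 1)) =
      (fun z : Fin (n + j) → ℤ => z ∘ Fin.castAdd j) ∘ Fin.init from rfl, image_comp]
    exact hQ.image_init.image_comp_castAdd

end Projection

theorem Polyhedral.image_vecMul_add {m n : ℕ} (A : Matrix (Fin m) (Fin n) ℤ) (b : Fin n → ℤ)
    {P : Set (Fin m → ℤ)} (hP : Polyhedral P) : Polyhedral ((fun v => v ᵥ* A + b) '' P) := by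
  set E := fun v : Fin m → ℤ => v ᵥ* A + b
  -- the graph of `E` over `P`, image coordinates first
  set G : Set (Fin (n + m) → ℤ) := (fun z => z ∘ Fin.natAdd n) ⁻¹' P ∩
    (fun z => z ∘ Fin.castAdd m - E (z ∘ Fin.natAdd n)) ⁻¹' {0}
  have hG : Polyhedral G := (hP.preimage (isIntAffine_comp_right _)).inter
    (polyhedral_singleton_zero.preimage ((isIntAffine_comp_right _).sub
      ((isIntAffine_vecMul_add A b).comp (isIntAffine_comp_right _))))
  have hEG : E '' P = (fun z => z ∘ Fin.castAdd m) '' G := by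
    ext w
    simp only [mem_image, G, mem_inter_iff, mem_preimage, mem_singleton_iff, sub_eq_zero]
    constructor
    · rintro ⟨v, hv, rfl⟩
      have hv' : Fin.append (E v) v ∘ Fin.natAdd n = v := funext (Fin.append_right _ _)
      have hEv : Fin.append (E v) v ∘ Fin.castAdd m = E v := funext (Fin.append_left _ _)
      exact ⟨Fin.append (E v) v, ⟨by rwa [hv'], by rw [hv', hEv]⟩, hEv⟩
    · rintro ⟨z, ⟨hz, hzE⟩, rfl⟩
      exact ⟨_, hz, hzE.symm⟩
  rw [hEG]
  exact hG.image_comp_castAdd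

/-- Images and preimages of polyhedral sets under integer affine transforms
`v ↦ vA + b` are polyhedral. -/
theorem polyhedral_affine_image_preimage {m n : ℕ}
    (A : Matrix (Fin m) (Fin n) ℤ) (b : Fin n → ℤ)
    (P : Set (Fin m → ℤ)) (Q : Set (Fin n → ℤ))
    (hP : Polyhedral P) (hQ : Polyhedral Q) :
    Polyhedral ((fun v : Fin m → ℤ => fun j => (∑ i, v i * A i j) + b j) '' P) ∧
    Polyhedral ((fun v : Fin m → ℤ => fun j => (∑ i, v i * A i j) + b j) ⁻¹' Q) :=
  ⟨hP.image_vecMul_add A b, hQ.preimage (isIntAffine_vecMul_add A b)⟩
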